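/- Let 0 < α < 1, β > 0, and let U(x;β) and Λ(β) be the even solution and parameter defined via w and η. Then the function ψ(x;β) = (x-α)·U'(x;β) + 2 satisfies the linearized equation ψ'' + Λ(β) h(x,α) e^{U(x;β)} ψ = 0 on (-1,1)\{-α,α}. -/

import Mathlib

open Set

noncomputable def w (x : ℝ) : ℝ := Real.log (1 - Real.tanh (x / Real.sqrt 2) ^ 2)

noncomputable def artanh (x : ℝ) : ℝ := (1 / 2) * Real.log ((1 + x) / (1 - x))

noncomputable def eta (β : ℝ) : ℝ := Real.sqrt 2 * artanh (Real.sqrt (1 - Real.exp (-β)))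

noncomputable def Lam (α β : ℝ) : ℝ := (1 - α) ^ (-2 : ℤ) * Real.exp (-β) * (eta β) ^ 2

noncomputable def step (α x : ℝ) : ℝ := if |x| < α then 0 else 1

noncomputable def U (α β x : ℝ) : ℝ :=
  if |x| < α then β else w (eta β * (|x| - α) / (1 - α)) + β

noncomputable def psi (α β x : ℝ) : ℝ := (x - α) * deriv (U α β) x + 2

/-!
On each of the three intervals cut out by `±α`, `U` solves Liouville's equation
`u'' + K eᵘ = 0` with the constant `K = Λ h`: inside, `U` is constant and `h = 0`; outside,
`U` is an affine reparametrisation of `w`, and `w'' = -eʷ` because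
`w' = -√2 tanh (x/√2)` and `eʷ = 1 - tanh² (x/√2)`.
Liouville's equation is invariant under the dilations `u ↦ u (λ (x - a) + a) + 2 log λ`,
so their derivative at `λ = 1`, which is `ψ = (x - a) u' + 2`, solves the linearised equation
`ψ'' + K eᵘ ψ = 0`.
-/

open Real Filter Topology

theorem Real.hasDerivAt_tanh (x : ℝ) : HasDerivAt tanh (1 - tanh x ^ 2) x := by
  rw [show tanh = fun y => sinh y / cosh y from funext tanh_eq_sinh_div_cosh]
  refine ((hasDerivAt_sinh x).div (hasDerivAt_cosh x) (cosh_pos x).ne').congr_deriv ?_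
  field_simp

def SolvesLiouville (K : ℝ) (u : ℝ → ℝ) : Prop :=
  Differentiable ℝ u ∧ ∀ x, HasDerivAt (deriv u) (-K * exp (u x)) x

noncomputable def infinitesimalDilation (a : ℝ) (u : ℝ → ℝ) (x : ℝ) : ℝ :=
  (x - a) * deriv u x + 2

namespace SolvesLiouville

variable {K : ℝ} {u : ℝ → ℝ}

theorem const (b : ℝ) : SolvesLiouville 0 fun _ => b := by
  refine ⟨differentiable_const b, fun x => ?_⟩
  simpa using hasDerivAt_const x (0 : ℝ)

theorem comp_affine_add (hu : SolvesLiouville K u) (m b c : ℝ) :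
    SolvesLiouville (m ^ 2 * exp (-c) * K) fun y => u (m * y + b) + c := by
  have haff (y : ℝ) : HasDerivAt (fun y => m * y + b) m y := by
    simpa using ((hasDerivAt_id y).const_mul m).add_const b
  have hderiv : deriv (fun y => u (m * y + b) + c) = fun y => deriv u (m * y + b) * m :=
    funext fun y => ((((hu.1 _).hasDerivAt).comp y (haff y)).add_const c).deriv
  refine ⟨((hu.1.comp (differentiable_id.const_mul m |>.add_const b)).add_const c), fun y => ?_⟩
  rw [hderiv]
  refine (((hu.2 (m * y + b)).comp y (haff y)).mul_const m).congr_deriv ?_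
  rw [exp_add, exp_neg]
  field_simp

theorem linearized_infinitesimalDilation (hu : SolvesLiouville K u) (a x : ℝ) :
    deriv (deriv (infinitesimalDilation a u)) x
      + K * exp (u x) * infinitesimalDilation a u x = 0 := by
  obtain ⟨hdiff, hu''⟩ := hu
  have hψ' (y : ℝ) : HasDerivAt (infinitesimalDilation a u)
      (deriv u y + (y - a) * (-K * exp (u y))) y :=
    ((((hasDerivAt_id' y).sub_const a).fun_mul (hu'' y)).add_const 2).congr_deriv (by ring)
  have hψ'' := (hu'' x).fun_add
    (((hasDerivAt_id' x).sub_const a).fun_mul (((hdiff x).hasDerivAt.exp).const_mul (-K)))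
  rw [funext fun y => (hψ' y).deriv, hψ''.deriv, infinitesimalDilation]
  ring

end SolvesLiouville

theorem Filter.EventuallyEq.infinitesimalDilation {u v : ℝ → ℝ} {x : ℝ} (h : u =ᶠ[𝓝 x] v)
    (a : ℝ) : infinitesimalDilation a u =ᶠ[𝓝 x] infinitesimalDilation a v :=
  h.deriv.mono fun y hy => by simp only [_root_.infinitesimalDilation, hy]

theorem Real.one_sub_tanh_sq_pos (x : ℝ) : 0 < 1 - tanh x ^ 2 :=
  sub_pos.mpr (tanh_sq_lt_one x)

theorem exp_w (x : ℝ) : exp (w x) = 1 - tanh (x / √2) ^ 2 :=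
  exp_log (one_sub_tanh_sq_pos _)

theorem hasDerivAt_tanh_div_sqrt_two (x : ℝ) :
    HasDerivAt (fun y => tanh (y / √2)) ((1 - tanh (x / √2) ^ 2) / √2) x := by
  exact ((hasDerivAt_tanh (x / √2)).comp x ((hasDerivAt_id' x).div_const √2)).congr_deriv
    (mul_one_div _ _)

theorem hasDerivAt_w (x : ℝ) : HasDerivAt w (-√2 * tanh (x / √2)) x := by
  have hpos := one_sub_tanh_sq_pos (x / √2)
  refine ((((hasDerivAt_tanh_div_sqrt_two x).fun_pow 2).const_sub 1).log hpos.ne').congr_deriv ?_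
  have : √2 ^ 2 = 2 := sq_sqrt zero_le_two
  field_simp
  linear_combination tanh (x / √2) * this

theorem solvesLiouville_w : SolvesLiouville 1 w := by
  refine ⟨fun x => (hasDerivAt_w x).differentiableAt, fun x => ?_⟩
  rw [funext fun y => (hasDerivAt_w y).deriv]
  refine ((hasDerivAt_tanh_div_sqrt_two x).const_mul (-√2)).congr_deriv ?_
  rw [exp_w]
  field_simp

theorem Lam_eq (α β : ℝ) : Lam α β = (eta β / (1 - α)) ^ 2 * exp (-β) := by
  rw [Lam, zpow_neg, div_pow]
  norm_cast
  ring

theorem exists_solvesLiouville_eventuallyEq_U {α x : ℝ} (β : ℝ) (hα : 0 < α) (hx : |x| ≠ α) :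
    ∃ v, U α β =ᶠ[𝓝 x] v ∧ SolvesLiouville (Lam α β * step α x) v := by
  set c := eta β / (1 - α)
  rcases lt_or_gt_of_ne hx with hin | hout
  · refine ⟨fun _ => β, eventuallyEq_of_mem (isOpen_lt continuous_abs continuous_const
      |>.mem_nhds hin) fun y (hy : |y| < α) => if_pos hy, ?_⟩
    simpa [step, hin] using SolvesLiouville.const β
  have hstep : Lam α β * step α x = c ^ 2 * exp (-β) * 1 := by
    rw [step, if_neg hout.not_gt, Lam_eq]
  rcases lt_abs.mp hout with hpos | hneg
  · refine ⟨fun y => w (c * y + -(c * α)) + β, eventuallyEq_of_mem (Ioi_mem_nhds hpos)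
      fun y (hy : α < y) => ?_, hstep ▸ solvesLiouville_w.comp_affine_add c _ β⟩
    rw [U, if_neg (by rw [abs_of_pos (hα.trans hy)]; exact hy.not_gt), abs_of_pos (hα.trans hy)]
    simp only [c]
    ring_nf
  · refine ⟨fun y => w (-c * y + -(c * α)) + β, eventuallyEq_of_mem (Iio_mem_nhds
      (lt_neg.mp hneg)) fun y (hy : y < -α) => ?_, ?_⟩
    · have hy0 : y < 0 := by linarith
      rw [U, if_neg (by rw [abs_of_neg hy0]; linarith), abs_of_neg hy0]
      simp only [c]
      ring_nf
    · rw [hstep, ← neg_sq]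
      exact solvesLiouville_w.comp_affine_add (-c) _ β

theorem stmt_17_general (α β : ℝ) (hα : 0 < α ∧ α < 1) :
    ∀ x ∈ Ioo (-1 : ℝ) 1 \ {-α, α},
      deriv (deriv (psi α β)) x
        + Lam α β * step α x * Real.exp (U α β x) * psi α β x = 0 := by
  rintro x ⟨-, hx⟩
  have habs : |x| ≠ α := fun h => hx (by
    rcases abs_eq hα.1.le |>.mp h with h | h <;> simp [h])
  obtain ⟨v, hUv, hv⟩ := exists_solvesLiouville_eventuallyEq_U β hα.1 habs
  have hψ := hUv.infinitesimalDilation α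
  change deriv (deriv (infinitesimalDilation α (U α β))) x
    + _ * exp (U α β x) * infinitesimalDilation α (U α β) x = 0
  rw [hψ.deriv.deriv_eq, hψ.eq_of_nhds, hUv.eq_of_nhds]
  exact hv.linearized_infinitesimalDilation α x

theorem stmt_17 (α β : ℝ) (hα : 0 < α ∧ α < 1) (hβ : 0 < β) :
    ∀ x ∈ Ioo (-1 : ℝ) 1 \ {-α, α},
      deriv (deriv (psi α β)) x
        + Lam α β * step α x * Real.exp (U α β x) * psi α β x = 0 :=
  stmt_17_general α β hα
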